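/- For any G ∈ ℝ^{n×n} and any y, ŷ ∈ ℝ^{2n}, the dual objective φ satisfies the descent-lemma-type upper bound φ(y) ≤ φ(ŷ) + ⟨∇φ(ŷ), y − ŷ⟩ + ½‖𝓑*(y − ŷ)‖², where ∇φ(ŷ) = 𝓑Π_C(𝓑*ŷ + G) − b. -/

import Mathlib

open Filter Topology
open scoped RealInnerProductSpace

/-- The space `ℝ^{n×n}` of square matrices endowed with the Frobenius (Euclidean)
inner product, realized as a Euclidean space indexed by pairs. -/
abbrev MatSp (n : ℕ) := EuclideanSpace ℝ (Fin n × Fin n)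

/-- The space `ℝ^{2n}`, realized as a Euclidean space indexed by `Fin n ⊕ Fin n`. -/
abbrev VecSp (n : ℕ) := EuclideanSpace ℝ (Fin n ⊕ Fin n)

/-- The Birkhoff polytope `𝔅ₙ` of doubly stochastic matrices. -/
def Birkhoff (n : ℕ) : Set (MatSp n) :=
  {X | (∀ i, ∑ j, X (i, j) = 1) ∧ (∀ j, ∑ i, X (i, j) = 1) ∧ ∀ q, 0 ≤ X q}

/-- The linear map `𝓑(X) = [Xe; Xᵀe]`. -/
noncomputable def opB {n : ℕ} (X : MatSp n) : VecSp n :=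
  WithLp.toLp 2 (fun s => Sum.elim (fun i => ∑ j, X (i, j)) (fun j => ∑ i, X (i, j)) s)

/-- The adjoint `𝓑*` of `𝓑`: `(𝓑*y)_{ij} = y_i + y_{n+j}`. -/
noncomputable def opBstar {n : ℕ} (y : VecSp n) : MatSp n :=
  WithLp.toLp 2 (fun q => y (Sum.inl q.1) + y (Sum.inr q.2))

/-- The vector `b = [e; e] ∈ ℝ^{2n}` of all ones. -/
noncomputable def bvec (n : ℕ) : VecSp n := WithLp.toLp 2 (fun _ => 1)

/-- The entrywise projection `Π_C` onto the nonnegative orthant `C`. -/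
noncomputable def projC {n : ℕ} (X : MatSp n) : MatSp n := WithLp.toLp 2 (fun q => max (X q) 0)

/-- The dual objective `φ(y) = ½‖Π_C(𝓑*y + G)‖² − ⟨b, y⟩ − ½‖G‖²`. -/
noncomputable def phiObj {n : ℕ} (G : MatSp n) (y : VecSp n) : ℝ :=
  (1 / 2) * ‖projC (opBstar y + G)‖ ^ 2 - ⟪bvec n, y⟫ - (1 / 2) * ‖G‖ ^ 2

/-- The gradient `∇φ(y) = 𝓑 Π_C(𝓑*y + G) − b`. -/
noncomputable def gradPhi {n : ℕ} (G : MatSp n) (y : VecSp n) : VecSp n :=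
  opB (projC (opBstar y + G)) - bvec n


lemma normsq_eq {n : ℕ} (X : MatSp n) : ‖X‖ ^ 2 = ∑ q, X q * X q := by
  rw [EuclideanSpace.norm_eq, Real.sq_sqrt (Finset.sum_nonneg (fun _ _ => sq_nonneg _))]
  simp [Real.norm_eq_abs, sq_abs, sq]

lemma adj_eq {n : ℕ} (M : MatSp n) (v : VecSp n) :
    ⟪opB M, v⟫ = ∑ q : Fin n × Fin n, M q * opBstar v q := by
  simp only [PiLp.inner_apply, RCLike.inner_apply, conj_trivial]
  rw [Fintype.sum_sum_type]
  simp only [opB, opBstar, Sum.elim_inl, Sum.elim_inr]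
  rw [Fintype.sum_prod_type]
  simp only [mul_add, Finset.sum_add_distrib]
  congr 1
  · simp [Finset.mul_sum, mul_comm]
  · rw [Finset.sum_comm]
    simp [Finset.mul_sum, mul_comm]

lemma key_pt (b d : ℝ) :
    max (b + d) 0 * max (b + d) 0 ≤
      max b 0 * max b 0 + 2 * (max b 0 * d) + d * d := by
  have h1 : b + d ≤ max b 0 + d := by
    have := le_max_left b (0 : ℝ); linarith
  have h2 : max (b + d) 0 ≤ |max b 0 + d| := by
    rcases le_total (b + d) 0 with h | h
    · rw [max_eq_right h]; exact abs_nonneg _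
    · rw [max_eq_left h]; exact h1.trans (le_abs_self _)
  have h3 : max (b + d) 0 * max (b + d) 0 ≤ (max b 0 + d) * (max b 0 + d) := by
    have h0 : (0:ℝ) ≤ max (b + d) 0 := le_max_right _ _
    nlinarith [abs_nonneg (max b 0 + d), sq_abs (max b 0 + d),
      mul_self_le_mul_self h0 h2]
  nlinarith [h3]

/-- the descent-lemma-type upper bound
`φ(y) ≤ φ(ŷ) + ⟨∇φ(ŷ), y − ŷ⟩ + ½‖𝓑*(y − ŷ)‖²`. -/
theorem stmt_19 (n : ℕ) (G : MatSp n) (y yhat : VecSp n) :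
    phiObj G y ≤ phiObj G yhat + ⟪gradPhi G yhat, y - yhat⟫
      + (1 / 2) * ‖opBstar (y - yhat)‖ ^ 2 := by
  classical
  simp only [phiObj, gradPhi]
  set A : MatSp n := opBstar y + G with hA
  set B : MatSp n := opBstar yhat + G with hB
  set D : MatSp n := opBstar (y - yhat) with hD
  have hDq : ∀ q : Fin n × Fin n, A q = B q + D q := by
    intro q
    simp only [hA, hB, hD, opBstar, PiLp.add_apply, PiLp.sub_apply]
    ring
  have hgrad : ⟪opB (projC B) - bvec n, y - yhat⟫
      = (∑ q : Fin n × Fin n, projC B q * D q) - ⟪bvec n, y - yhat⟫ := by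
    rw [inner_sub_left, adj_eq]
  have hb : ⟪bvec n, y⟫ = ⟪bvec n, yhat⟫ + ⟪bvec n, y - yhat⟫ := by
    rw [inner_sub_right]; ring
  have key : ∑ q : Fin n × Fin n, projC A q * projC A q
      ≤ (∑ q : Fin n × Fin n, projC B q * projC B q)
        + 2 * (∑ q : Fin n × Fin n, projC B q * D q)
        + ∑ q : Fin n × Fin n, D q * D q := by
    rw [Finset.mul_sum, ← Finset.sum_add_distrib, ← Finset.sum_add_distrib]
    apply Finset.sum_le_sum
    intro q _
    simp only [projC]
    rw [hDq q]
    exact key_pt (B q) (D q)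
  rw [normsq_eq (projC A), normsq_eq (projC B), normsq_eq D, hgrad, hb]
  linarith [key]
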